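/- Let L be a commutative ring, n ≥ 1, and F a one-dimensional commutative formal group law over L. Consider the power series ring L[[t_1,...,t_{n+1}]] and the ideal J generated by the product t_1⋯t_{n+1} together with the elements t_i −_F t_{n+1} for 1 ≤ i ≤ n (formal differences with respect to F). Then the quotient L[[t_1,...,t_{n+1}]]/J is isomorphic as an L-algebra to L[t]/(t^{n+1}). -/

import Mathlib

noncomputable section

variable {L : Type} [CommRing L] {σ : Type}

/-- Substitution `F(f, g)` of two power series with zero constant term into a
two-variable power series `F`.  The coefficient of a monomial `m` only receives
contributions from terms of `F` of total degree at most the degree of `m`, which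
makes the following finite sum the correct substitution whenever `f` and `g`
have zero constant term. -/
def subst2 (F : MvPowerSeries (Fin 2) L) (f g : MvPowerSeries σ L) :
    MvPowerSeries σ L :=
  fun m =>
    ∑ i ∈ Finset.range ((m.sum fun _ e => e) + 1),
      ∑ j ∈ Finset.range ((m.sum fun _ e => e) + 1),
        (MvPowerSeries.coeff (Finsupp.single 0 i + Finsupp.single 1 j) F) *
          MvPowerSeries.coeff m (f ^ i * g ^ j)

/-- Substitution `ρ(f)` of a power series with zero constant term into a
one-variable power series `ρ`. -/
def subst1 (ρ : PowerSeries L) (f : MvPowerSeries σ L) : MvPowerSeries σ L :=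
  fun m =>
    ∑ i ∈ Finset.range ((m.sum fun _ e => e) + 1),
      (PowerSeries.coeff i ρ) * MvPowerSeries.coeff m (f ^ i)

/-- A one-dimensional commutative formal group law over `L`:
a power series `F(u,v) ∈ L[[u,v]]` with `F(u,0) = u`, `F(0,v) = v`,
`F(u,v) = F(v,u)` and `F(u, F(v,w)) = F(F(u,v), w)`. -/
structure IsFormalGroupLaw (F : MvPowerSeries (Fin 2) L) : Prop where
  zero_right : subst2 F (PowerSeries.X : PowerSeries L) 0 = PowerSeries.X
  zero_left : subst2 F 0 (PowerSeries.X : PowerSeries L) = PowerSeries.X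
  comm : subst2 F (MvPowerSeries.X (1 : Fin 2)) (MvPowerSeries.X (0 : Fin 2)) = F
  assoc : subst2 F (MvPowerSeries.X (0 : Fin 3))
      (subst2 F (MvPowerSeries.X (1 : Fin 3)) (MvPowerSeries.X (2 : Fin 3))) =
    subst2 F (subst2 F (MvPowerSeries.X (0 : Fin 3)) (MvPowerSeries.X (1 : Fin 3)))
      (MvPowerSeries.X (2 : Fin 3))

end

/-!
On series without constant term the finite sums `subst2`, `subst1` are Mathlib's substitutions,
so `F` is a commutative `FormalGroup`. Write `x ⊖ y` for `F(x, ρ(y))`.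

Since `F(0, v) = v`, `F(u, v) - v` is a multiple of `u`; with `t_i = (t_i ⊖ t) +_F t` this puts
`t_i - t` in `J` (`t = t_{n+1}`), so in the quotient every `t_i` becomes the class `x` of `t`,
and `x ^ (n + 1) = 0` by the product generator. Collapsing all variables to one variable maps
`J` into `(t ^ (n + 1))`, since it kills `t ⊖ t`. The resulting map to `L⟦t⟧ ⧸ (t ^ (n + 1))` has
inverse `t ↦ x`: an algebra map out of `L⟦t_1, …, t_{n+1}⟧` sending the variables into an ideal
`I` with `I ^ k = 0` is determined by the images of the variables, because a series with no
monomial of degree `< k` lies in `(t_1, …, t_{n+1}) ^ k`. Finally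
`L⟦t⟧ ⧸ (t ^ (n + 1)) ≃ L[t] ⧸ (t ^ (n + 1))`.
-/

open MvPowerSeries

namespace MvPowerSeries

variable {R : Type} [CommRing R] {σ : Type}

theorem coeff_pow_eq_zero_of_degree_lt {f : MvPowerSeries σ R} (hf : constantCoeff f = 0)
    {i : ℕ} {m : σ →₀ ℕ} (h : m.degree < i) : coeff m (f ^ i) = 0 :=
  coeff_of_lt_order <| (by exact_mod_cast h : (m.degree : ℕ∞) < i).trans_le
    (le_order_pow_of_constantCoeff_eq_zero i hf)

theorem coeff_pow_mul_pow_eq_zero_of_degree_lt {f g : MvPowerSeries σ R}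
    (hf : constantCoeff f = 0) (hg : constantCoeff g = 0) {i j : ℕ} {m : σ →₀ ℕ}
    (h : m.degree < i + j) : coeff m (f ^ i * g ^ j) = 0 := by
  apply coeff_of_lt_order
  calc (m.degree : ℕ∞) < i + j := by exact_mod_cast h
    _ ≤ (f ^ i).order + (g ^ j).order :=
      add_le_add (le_order_pow_of_constantCoeff_eq_zero i hf)
        (le_order_pow_of_constantCoeff_eq_zero j hg)
    _ ≤ _ := le_order_mul

theorem coeff_X_mul [DecidableEq σ] (s : σ) (f : MvPowerSeries σ R) (d : σ →₀ ℕ) :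
    coeff d (X s * f) =
      if Finsupp.single s 1 ≤ d then coeff (d - Finsupp.single s 1) f else 0 := by
  rw [X_def, coeff_monomial_mul, one_mul]

theorem exists_eq_sum_X_mul [Fintype σ] {k : ℕ} {f : MvPowerSeries σ R}
    (hf : ∀ d : σ →₀ ℕ, d.degree < k + 1 → coeff d f = 0) :
    ∃ g : σ → MvPowerSeries σ R, f = ∑ i, X i * g i ∧
      ∀ i, ∀ d : σ →₀ ℕ, d.degree < k → coeff d (g i) = 0 := by
  classical
  let : LinearOrder σ := LinearOrder.lift' _ (Fintype.equivFin σ).injective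
  -- `X i * g i` is the part of `f` made of the monomials whose least variable is `i`
  let g (i : σ) : MvPowerSeries σ R := fun d =>
    if ∀ j < i, d j = 0 then coeff (d + Finsupp.single i 1) f else 0
  have hg (i : σ) (d : σ →₀ ℕ) : coeff d (g i) =
      if ∀ j < i, d j = 0 then coeff (d + Finsupp.single i 1) f else 0 := rfl
  refine ⟨g, ?_, fun i d hd => ?_⟩
  · ext d
    rw [map_sum]
    simp_rw [coeff_X_mul, hg]
    by_cases hd : d = 0
    · subst hd
      simpa using hf 0 (by simp)
    have hne : d.support.Nonempty := Finsupp.support_nonempty_iff.2 hd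
    set i₀ := d.support.min' hne
    have hi₀ : d i₀ ≠ 0 := Finsupp.mem_support_iff.1 (Finset.min'_mem _ _)
    have hlt (j : σ) (hj : j < i₀) : d j = 0 := by
      by_contra h
      exact (Finset.min'_le _ j (Finsupp.mem_support_iff.2 h)).not_gt hj
    have hcoord (i j : σ) (h : j ≠ i) : (d - Finsupp.single i 1 : σ →₀ ℕ) j = d j := by
      simp [h.symm]
    rw [Finset.sum_eq_single i₀ _ (by simp)]
    · have hle : Finsupp.single i₀ 1 ≤ d :=
        Finsupp.single_le_iff.2 (Nat.one_le_iff_ne_zero.2 hi₀)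
      rw [if_pos hle, if_pos fun j hj => (hcoord _ _ hj.ne).trans (hlt j hj),
        tsub_add_cancel_of_le hle]
    · intro b _ hb
      split_ifs with h1 h2
      · have hb0 : d b ≠ 0 := Nat.one_le_iff_ne_zero.1 (Finsupp.single_le_iff.1 h1)
        have hi₀b : i₀ < b :=
          lt_of_le_of_ne (Finset.min'_le _ _ (Finsupp.mem_support_iff.2 hb0)) (Ne.symm hb)
        exact absurd ((hcoord _ _ hi₀b.ne).symm.trans (h2 _ hi₀b)) hi₀
      all_goals rfl
  · rw [hg]
    split_ifs
    · exact hf _ (by simp [hd])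
    · rfl

theorem mem_span_X_pow_of_coeff_eq_zero [Finite σ] {k : ℕ} {f : MvPowerSeries σ R}
    (hf : ∀ d : σ →₀ ℕ, d.degree < k → coeff d f = 0) : f ∈ Ideal.span (Set.range X) ^ k := by
  have := Fintype.ofFinite σ
  induction k generalizing f with
  | zero => simp
  | succ k ih =>
    obtain ⟨g, rfl, hg⟩ := exists_eq_sum_X_mul hf
    rw [pow_succ']
    exact Ideal.sum_mem _ fun i _ =>
      Ideal.mul_mem_mul (Ideal.subset_span ⟨i, rfl⟩) (ih (hg i))

theorem algHom_ext_of_pow_eq_bot [Finite σ] {A : Type} [CommRing A] [Algebra R A]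
    {φ ψ : MvPowerSeries σ R →ₐ[R] A} {I : Ideal A} {k : ℕ} (hI : I ^ k = ⊥)
    (hφI : ∀ s, φ (X s) ∈ I) (h : ∀ s, φ (X s) = ψ (X s)) : φ = ψ := by
  have hker (χ : MvPowerSeries σ R →ₐ[R] A) (hχ : ∀ s, χ (X s) ∈ I) {g : MvPowerSeries σ R}
      (hg : g ∈ Ideal.span (Set.range X) ^ k) : χ g = 0 := by
    have hmap := Ideal.mem_map_of_mem χ hg
    rw [Ideal.map_pow, Ideal.map_span] at hmap
    have hle : Ideal.span (χ '' Set.range X) ≤ I :=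
      Ideal.span_le.2 (by rintro _ ⟨_, ⟨s, rfl⟩, rfl⟩; exact hχ s)
    simpa [hI] using Ideal.pow_right_mono hle k hmap
  have htrunc (f : MvPowerSeries σ R) :
      f - (truncTotal k f : MvPowerSeries σ R) ∈ Ideal.span (Set.range X) ^ k :=
    mem_span_X_pow_of_coeff_eq_zero fun d hd => by simp [coeff_truncTotal _ hd]
  have hpoly : φ.comp (MvPolynomial.coeToMvPowerSeries.algHom R) =
      ψ.comp (MvPolynomial.coeToMvPowerSeries.algHom R) :=
    MvPolynomial.algHom_ext fun s => by simpa using h s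
  ext f
  have key (χ : MvPowerSeries σ R →ₐ[R] A) (hχ : ∀ s, χ (X s) ∈ I) :
      χ f = χ (truncTotal k f : MvPowerSeries σ R) := by
    rw [← sub_eq_zero, ← map_sub]
    exact hker χ hχ (htrunc f)
  rw [key φ hφI, key ψ fun s => h s ▸ hφI s]
  simpa using DFunLike.congr_fun hpoly (truncTotal k f)

theorem rename_subst {τ υ : Type} (f : τ → υ) [Filter.TendstoCofinite f]
    {a : σ → MvPowerSeries τ R} (ha : HasSubst a) (p : MvPowerSeries σ R) :
    rename f (subst a p) = subst (fun s => rename f (a s)) p := by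
  simp only [rename_eq_subst, subst_comp_subst_apply ha (HasSubst.X_comp f)]

theorem exists_quotient_algEquiv_powerSeries [Finite σ]
    (J : Ideal (MvPowerSeries σ R)) (l : σ) (k : ℕ) (hsub : ∀ j, X j - X l ∈ J)
    (hpow : X l ^ k ∈ J)
    (hJ : J ≤ Ideal.comap (rename fun _ => ()) (Ideal.span {(PowerSeries.X : PowerSeries R) ^ k})) :
    ∃ e : (MvPowerSeries σ R ⧸ J) ≃ₐ[R]
        (PowerSeries R ⧸ Ideal.span {(PowerSeries.X : PowerSeries R) ^ k}),
      e (Ideal.Quotient.mk J (X l)) = Ideal.Quotient.mk _ PowerSeries.X := by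
  set I := Ideal.span {(PowerSeries.X : PowerSeries R) ^ k}
  have hmkX (j : σ) : Ideal.Quotient.mk J (X j) = Ideal.Quotient.mk J (X l) :=
    (Ideal.Quotient.mk_eq_mk_iff_sub_mem _ _).2 (hsub j)
  have hx : Ideal.Quotient.mk J (X l) ^ k = 0 := by
    rw [← map_pow, Ideal.Quotient.eq_zero_iff_mem]
    exact hpow
  let π : MvPowerSeries σ R →ₐ[R] PowerSeries R := rename fun _ => ()
  let ι : PowerSeries R →ₐ[R] MvPowerSeries σ R := rename fun _ => l
  have hπι (g : PowerSeries R) : π (ι g) = g := by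
    have hid : ((fun _ : σ => ()) ∘ fun _ : Unit => l) = id := rfl
    simp [π, ι, hid]
  have hπX (j : σ) : π (X j) = PowerSeries.X := rename_X _ j
  have hιX : ι PowerSeries.X = X l := rename_X _ ()
  let Φ : (MvPowerSeries σ R ⧸ J) →ₐ[R] PowerSeries R ⧸ I :=
    Ideal.Quotient.liftₐ J ((Ideal.Quotient.mkₐ R I).comp π) fun f hf =>
      Ideal.Quotient.eq_zero_iff_mem.2 (hJ hf)
  let Ψ : (PowerSeries R ⧸ I) →ₐ[R] MvPowerSeries σ R ⧸ J :=
    Ideal.Quotient.liftₐ I ((Ideal.Quotient.mkₐ R J).comp ι) fun g hg => by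
      obtain ⟨c, rfl⟩ := Ideal.mem_span_singleton'.1 hg
      rw [AlgHom.comp_apply, map_mul, map_mul, map_pow, hιX, Ideal.Quotient.mkₐ_eq_mk,
        map_pow, hx, mul_zero]
  have hΦ (f : MvPowerSeries σ R) : Φ (Ideal.Quotient.mk J f) = Ideal.Quotient.mk I (π f) := rfl
  have hΨ (g : PowerSeries R) : Ψ (Ideal.Quotient.mk I g) = Ideal.Quotient.mk J (ι g) := rfl
  refine ⟨AlgEquiv.ofAlgHom Φ Ψ ?_ ?_, hΦ (X l) |>.trans (by rw [hπX])⟩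
  · apply Ideal.Quotient.algHom_ext
    ext g
    simp only [AlgHom.comp_apply, Ideal.Quotient.mkₐ_eq_mk, hΨ, hΦ, hπι, AlgHom.id_apply]
  · apply Ideal.Quotient.algHom_ext
    refine algHom_ext_of_pow_eq_bot (I := Ideal.span {Ideal.Quotient.mk J (X l)}) (k := k)
      ?_ (fun s => ?_) (fun s => ?_)
    · rw [Ideal.span_singleton_pow, hx, Ideal.span_singleton_eq_bot.2 rfl]
    all_goals
      simp only [AlgHom.comp_apply, Ideal.Quotient.mkₐ_eq_mk, hΦ, hΨ, hπX, hιX, hmkX,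
        AlgHom.id_apply]
    exact Ideal.mem_span_singleton_self _

end MvPowerSeries

theorem Ideal.pow_card_mem_of_prod_mem {A ι : Type} [CommRing A] [Fintype ι] {J : Ideal A}
    {a : ι → A} {b : A} (hsub : ∀ i, a i - b ∈ J) (hprod : ∏ i, a i ∈ J) :
    b ^ Fintype.card ι ∈ J := by
  rw [← Ideal.Quotient.eq_zero_iff_mem] at hprod ⊢
  rwa [map_prod, Finset.prod_congr rfl fun i _ =>
    (Ideal.Quotient.mk_eq_mk_iff_sub_mem _ _).2 (hsub i), Finset.prod_const, Finset.card_univ,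
    ← map_pow] at hprod

namespace Polynomial

variable {R : Type} [CommRing R]

theorem isDistinguishedAt_X_pow_bot (k : ℕ) : (X ^ k : R[X]).IsDistinguishedAt ⊥ where
  mem hn := by
    rw [coeff_X_pow, if_neg (hn.trans_le (natDegree_X_pow_le k)).ne]
    exact zero_mem _
  monic := monic_X_pow k

noncomputable def quotientSpanXPowAlgEquiv (k : ℕ) :
    (R[X] ⧸ Ideal.span {(X ^ k : R[X])}) ≃ₐ[R]
      (PowerSeries R ⧸ Ideal.span {(PowerSeries.X : PowerSeries R) ^ k}) :=
  (isDistinguishedAt_X_pow_bot k).algEquivQuotient.trans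
    (Ideal.quotientEquivAlgOfEq R (by simp))

theorem quotientSpanXPowAlgEquiv_mk_X (k : ℕ) :
    quotientSpanXPowAlgEquiv (R := R) k (Ideal.Quotient.mk _ X) =
      Ideal.Quotient.mk _ PowerSeries.X := by
  simp [quotientSpanXPowAlgEquiv]

end Polynomial

variable {L : Type} [CommRing L] {σ : Type}

theorem coeff_subst2 (F : MvPowerSeries (Fin 2) L) (f g : MvPowerSeries σ L) (m : σ →₀ ℕ) :
    coeff m (subst2 F f g) =
      ∑ i ∈ Finset.range (m.degree + 1), ∑ j ∈ Finset.range (m.degree + 1),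
        coeff (Finsupp.single 0 i + Finsupp.single 1 j) F * coeff m (f ^ i * g ^ j) := rfl

theorem subst2_eq_subst (F : MvPowerSeries (Fin 2) L) {f g : MvPowerSeries σ L}
    (hf : constantCoeff f = 0) (hg : constantCoeff g = 0) :
    subst2 F f g = subst ![f, g] F := by
  have ha : HasSubst ![f, g] := hasSubst_of_constantCoeff_zero fun s => by fin_cases s <;> simpa
  have hprod (d : Fin 2 →₀ ℕ) : (d.prod fun s e => ![f, g] s ^ e) = f ^ d 0 * g ^ d 1 := by
    rw [Finsupp.prod_fintype _ _ (by simp), Fin.prod_univ_two]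
    rfl
  let e (p : ℕ × ℕ) : Fin 2 →₀ ℕ := Finsupp.single 0 p.1 + Finsupp.single 1 p.2
  have he : Function.Injective e := fun p q h => by
    have h0 := DFunLike.congr_fun h 0
    have h1 := DFunLike.congr_fun h 1
    simp only [e, Finsupp.coe_add, Pi.add_apply, Finsupp.single_eq_same,
      Finsupp.single_eq_of_ne zero_ne_one, Finsupp.single_eq_of_ne one_ne_zero,
      add_zero, zero_add] at h0 h1
    exact Prod.ext h0 h1
  ext m
  rw [coeff_subst ha, finsum_eq_sum_of_support_subset
    (s := (Finset.range (m.degree + 1) ×ˢ Finset.range (m.degree + 1)).image e)]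
  · rw [Finset.sum_image fun p _ q _ h => he h, Finset.sum_product, coeff_subst2]
    refine Finset.sum_congr rfl fun i _ => Finset.sum_congr rfl fun j _ => ?_
    simp [e, hprod, smul_eq_mul]
  · intro d hd
    rw [Function.mem_support, hprod] at hd
    rw [Finset.coe_image, Finset.coe_product]
    refine ⟨(d 0, d 1), ?_, ?_⟩
    · simp only [Set.mem_prod, Finset.coe_range, Set.mem_Iio]
      by_contra hlt
      exact hd (by rw [coeff_pow_mul_pow_eq_zero_of_degree_lt hf hg (by omega), smul_zero])
    · ext s
      fin_cases s <;> simp [e]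

theorem coeff_subst1 (ρ : PowerSeries L) (f : MvPowerSeries σ L) (m : σ →₀ ℕ) :
    coeff m (subst1 ρ f) =
      ∑ i ∈ Finset.range (m.degree + 1), PowerSeries.coeff i ρ * coeff m (f ^ i) := rfl

theorem subst1_eq_subst (ρ : PowerSeries L) {f : MvPowerSeries σ L} (hf : constantCoeff f = 0) :
    subst1 ρ f = PowerSeries.subst f ρ := by
  ext m
  rw [PowerSeries.coeff_subst (PowerSeries.HasSubst.of_constantCoeff_zero hf), coeff_subst1,
    finsum_eq_sum_of_support_subset (s := Finset.range (m.degree + 1))]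
  · rfl
  · intro i hi
    rw [Function.mem_support] at hi
    rw [Finset.coe_range, Set.mem_Iio]
    by_contra hlt
    exact hi (by rw [coeff_pow_eq_zero_of_degree_lt hf (by omega), smul_zero])

theorem subst_inverse_eq_zero {F : MvPowerSeries (Fin 2) L} {ρ : PowerSeries L}
    (hρ0 : PowerSeries.constantCoeff ρ = 0) (hρ : subst2 F (PowerSeries.X : PowerSeries L) ρ = 0)
    {w : MvPowerSeries σ L} (hw : constantCoeff w = 0) :
    subst ![w, PowerSeries.subst w ρ] F = 0 := by
  rw [subst2_eq_subst F PowerSeries.constantCoeff_X hρ0] at hρ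
  have ha : HasSubst ![(PowerSeries.X : PowerSeries L), ρ] :=
    hasSubst_of_constantCoeff_zero fun s => by fin_cases s; exacts [PowerSeries.constantCoeff_X, hρ0]
  have hw' := PowerSeries.HasSubst.of_constantCoeff_zero hw
  calc subst ![w, PowerSeries.subst w ρ] F
      = PowerSeries.subst w (subst ![(PowerSeries.X : PowerSeries L), ρ] F) := by
        rw [PowerSeries.subst_def w (subst _ F), subst_comp_subst_apply ha hw'.const]
        congr 1
        ext s : 1
        fin_cases s
        · simp [← PowerSeries.subst_def, PowerSeries.subst_X hw']
        · simp [← PowerSeries.subst_def]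
    _ = 0 := by rw [hρ, ← PowerSeries.coe_substAlgHom hw', map_zero]

theorem rename_subst_inverse_eq_zero {F : MvPowerSeries (Fin 2) L} {ρ : PowerSeries L}
    (hρ0 : PowerSeries.constantCoeff ρ = 0) (hρ : subst2 F (PowerSeries.X : PowerSeries L) ρ = 0)
    {τ : Type} (f : σ → τ) [Filter.TendstoCofinite f] {i j : σ} (h : f i = f j) :
    rename f (subst ![(X i : MvPowerSeries σ L), PowerSeries.subst (X j) ρ] F) = 0 := by
  have hXj := PowerSeries.HasSubst.of_constantCoeff_zero (constantCoeff_X (R := L) j)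
  have ha : HasSubst ![(X i : MvPowerSeries σ L), PowerSeries.subst (X j) ρ] :=
    hasSubst_of_constantCoeff_zero fun s => by
      fin_cases s
      exacts [constantCoeff_X i, PowerSeries.constantCoeff_subst_eq_zero (constantCoeff_X j) ρ hρ0]
  rw [rename_subst f ha, ← subst_inverse_eq_zero hρ0 hρ (constantCoeff_X (f j))]
  congr 1
  ext s : 1
  fin_cases s
  · simp [rename_X, h]
  · simp [PowerSeries.subst_def, rename_subst f hXj.const, rename_X]

namespace IsFormalGroupLaw

variable {F : MvPowerSeries (Fin 2) L} (hF : IsFormalGroupLaw F)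
include hF

theorem constantCoeff_eq_zero : constantCoeff F = 0 := by
  simpa [coeff_subst2, PowerSeries.X] using congrArg (coeff (0 : Unit →₀ ℕ)) hF.zero_right

theorem coeff_single_zero_one : coeff (Finsupp.single 0 1) F = 1 := by
  simpa [coeff_subst2, Finset.sum_range_succ, coeff_one, PowerSeries.coeff_X] using
    congrArg (coeff (Finsupp.single () 1)) hF.zero_right

theorem coeff_single_one (j : ℕ) : coeff (Finsupp.single 1 j) F = if j = 1 then 1 else 0 := by
  have h := congrArg (coeff (Finsupp.single () j)) hF.zero_left
  rw [coeff_subst2, Finset.sum_eq_single 0, Finset.sum_eq_single j] at h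
  · simpa [PowerSeries.coeff_X] using h
  · intro k _ hk
    simp [PowerSeries.coeff_X_pow, Ne.symm hk]
  · simp
  · intro i _ hi
    simp [zero_pow hi]
  · simp

theorem constantCoeff_subst2_X_X {τ : Type} (i j : τ) :
    constantCoeff (subst2 F (X i : MvPowerSeries τ L) (X j)) = 0 := by
  rw [subst2_eq_subst F (constantCoeff_X i) (constantCoeff_X j)]
  exact constantCoeff_subst_eq_zero HasSubst.X_X (fun s => by fin_cases s <;> simp)
    hF.constantCoeff_eq_zero

def toFormalGroup : FormalGroup L where
  toPowerSeries := F
  zero_constantCoeff := hF.constantCoeff_eq_zero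
  lin_coeff_X := hF.coeff_single_zero_one
  lin_coeff_Y := by simpa using hF.coeff_single_one 1
  assoc := by
    have h := hF.assoc
    rwa [subst2_eq_subst F (constantCoeff_X _) (hF.constantCoeff_subst2_X_X _ _),
      subst2_eq_subst F (hF.constantCoeff_subst2_X_X _ _) (constantCoeff_X _),
      subst2_eq_subst F (constantCoeff_X _) (constantCoeff_X _),
      subst2_eq_subst F (constantCoeff_X _) (constantCoeff_X _), eq_comm] at h

instance : hF.toFormalGroup.IsComm where
  comm := by
    have h := hF.comm
    rwa [subst2_eq_subst F (constantCoeff_X _) (constantCoeff_X _), eq_comm] at h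

theorem X_zero_dvd_sub_X_one : X 0 ∣ F - X 1 := by
  rw [X_dvd_iff]
  intro m hm
  have hm' : m = Finsupp.single 1 (m 1) := by ext s; fin_cases s <;> simp [hm]
  rw [hm', map_sub, hF.coeff_single_one, coeff_X]
  by_cases h : m 1 = 1 <;> simp [h, (Finsupp.single_injective _).eq_iff]

theorem sub_mem_span_subst_inverse {ρ : PowerSeries L}
    (hρ0 : PowerSeries.constantCoeff ρ = 0) (hρ : subst2 F (PowerSeries.X : PowerSeries L) ρ = 0)
    {u v : MvPowerSeries σ L} (hu : constantCoeff u = 0) (hv : constantCoeff v = 0) :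
    u - v ∈ Ideal.span {subst ![u, PowerSeries.subst v ρ] F} := by
  set w := PowerSeries.subst v ρ
  have hw : constantCoeff w = 0 := PowerSeries.constantCoeff_subst_eq_zero hv ρ hρ0
  have hu' := PowerSeries.HasSubst.of_constantCoeff_zero hu
  have hv' := PowerSeries.HasSubst.of_constantCoeff_zero hv
  have hw' := PowerSeries.HasSubst.of_constantCoeff_zero hw
  set g := subst ![u, w] F
  have hg : constantCoeff g = 0 :=
    constantCoeff_subst_eq_zero (hasSubst_of_constantCoeff_zero fun s => by fin_cases s <;> simpa)
      (fun s => by fin_cases s <;> simpa) hF.constantCoeff_eq_zero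
  have hu_eq : subst ![g, v] F = u := by
    have hassoc : subst ![g, v] F = subst ![u, subst ![w, v] F] F :=
      hF.toFormalGroup.assoc' hu' hw' hv'
    have hcomm : subst ![w, v] F = subst ![v, w] F := hF.toFormalGroup.comm' hw' hv'
    have hzero : subst ![u, 0] F = u := hF.toFormalGroup.add_zero hu'
    rw [hassoc, hcomm, subst_inverse_eq_zero hρ0 hρ hv, hzero]
  obtain ⟨H, hH⟩ := hF.X_zero_dvd_sub_X_one
  have hgv : HasSubst ![g, v] := hasSubst_of_constantCoeff_zero fun s => by fin_cases s <;> simpa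
  have hsub := congrArg (subst ![g, v]) hH
  rw [subst_sub hgv, subst_mul hgv, subst_X hgv, subst_X hgv] at hsub
  simp only [Matrix.cons_val_zero, Matrix.cons_val_one, Matrix.cons_val_fin_one, hu_eq] at hsub
  rw [hsub]
  exact Ideal.mul_mem_right _ _ (Ideal.mem_span_singleton_self _)

end IsFormalGroupLaw

theorem stmt_12_general (L : Type) [CommRing L] (n : ℕ)
    (F : MvPowerSeries (Fin 2) L) (hF : IsFormalGroupLaw F)
    (ρ : PowerSeries L) (hρ0 : PowerSeries.constantCoeff ρ = 0)
    (hρ : subst2 F (PowerSeries.X : PowerSeries L) ρ = 0)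
    (J : Ideal (MvPowerSeries (Fin (n + 1)) L))
    (hJ : J = Ideal.span
      ({∏ i : Fin (n + 1), (MvPowerSeries.X i : MvPowerSeries (Fin (n + 1)) L)} ∪
        Set.range (fun i : Fin n =>
          subst2 F (MvPowerSeries.X (i.castSucc : Fin (n + 1)))
            (subst1 ρ (MvPowerSeries.X (Fin.last n)))))) :
    ∃ e : (MvPowerSeries (Fin (n + 1)) L ⧸ J) ≃ₐ[L]
        (Polynomial L ⧸ Ideal.span {(Polynomial.X : Polynomial L) ^ (n + 1)}),
      e (Ideal.Quotient.mk J (MvPowerSeries.X (Fin.last n))) =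
        Ideal.Quotient.mk (Ideal.span {(Polynomial.X : Polynomial L) ^ (n + 1)})
          Polynomial.X := by
  have hgen (i : Fin n) : subst2 F (X i.castSucc) (subst1 ρ (X (Fin.last n))) =
      subst ![X i.castSucc, PowerSeries.subst (X (Fin.last n)) ρ] F := by
    rw [subst1_eq_subst ρ (constantCoeff_X _), subst2_eq_subst F (constantCoeff_X _)
      (PowerSeries.constantCoeff_subst_eq_zero (constantCoeff_X _) ρ hρ0)]
  simp_rw [hgen] at hJ
  have hsub (j : Fin (n + 1)) : X j - X (Fin.last n) ∈ J := by
    induction j using Fin.lastCases with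
    | last => simp
    | cast i =>
      refine Ideal.span_le.2 (Set.singleton_subset_iff.2 ?_)
        (hF.sub_mem_span_subst_inverse hρ0 hρ (constantCoeff_X _) (constantCoeff_X _))
      exact hJ ▸ Ideal.subset_span (Or.inr ⟨i, rfl⟩)
  have hpow := Ideal.pow_card_mem_of_prod_mem hsub (hJ ▸ Ideal.subset_span (Or.inl rfl))
  rw [Fintype.card_fin] at hpow
  have hrename : J ≤ Ideal.comap (rename fun _ => ())
      (Ideal.span {(PowerSeries.X : PowerSeries L) ^ (n + 1)}) := by
    rw [hJ, Ideal.span_le]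
    rintro _ (rfl | ⟨i, rfl⟩)
    · simp only [SetLike.mem_coe, Ideal.mem_comap, map_prod, rename_X, Finset.prod_const,
        Finset.card_univ, Fintype.card_fin]
      exact Ideal.mem_span_singleton_self _
    · simp [rename_subst_inverse_eq_zero hρ0 hρ (fun _ : Fin (n + 1) => ()) rfl]
  obtain ⟨e, he⟩ := exists_quotient_algEquiv_powerSeries J (Fin.last n) (n + 1) hsub hpow hrename
  refine ⟨e.trans (Polynomial.quotientSpanXPowAlgEquiv (n + 1)).symm, ?_⟩
  rw [AlgEquiv.trans_apply, he, AlgEquiv.symm_apply_eq, Polynomial.quotientSpanXPowAlgEquiv_mk_X]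

/-- Let `F` be a one-dimensional commutative formal group law over `L` with formal
inverse `ρ`, and `n ≥ 1`.  In `L[[t_1,...,t_{n+1}]]`, let `J` be the ideal generated by
the product `t_1 ⋯ t_{n+1}` together with the formal differences `t_i −_F t_{n+1}`
for `1 ≤ i ≤ n`.  Then `L[[t_1,...,t_{n+1}]]/J ≅ L[t]/(t^{n+1})` as `L`-algebras,
the isomorphism sending the class of `t_{n+1}` to the class of `t`.
(This computes the algebraic cobordism ring `Ω^*(Pⁿ) ≅ 𝕃[t]/(t^{n+1})`.) -/
theorem stmt_12 (L : Type) [CommRing L] (n : ℕ) (hn : 1 ≤ n)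
    (F : MvPowerSeries (Fin 2) L) (hF : IsFormalGroupLaw F)
    (ρ : PowerSeries L) (hρ0 : PowerSeries.constantCoeff ρ = 0)
    (hρ : subst2 F (PowerSeries.X : PowerSeries L) ρ = 0)
    (J : Ideal (MvPowerSeries (Fin (n + 1)) L))
    (hJ : J = Ideal.span
      ({∏ i : Fin (n + 1), (MvPowerSeries.X i : MvPowerSeries (Fin (n + 1)) L)} ∪
        Set.range (fun i : Fin n =>
          subst2 F (MvPowerSeries.X (i.castSucc : Fin (n + 1)))
            (subst1 ρ (MvPowerSeries.X (Fin.last n)))))) :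
    ∃ e : (MvPowerSeries (Fin (n + 1)) L ⧸ J) ≃ₐ[L]
        (Polynomial L ⧸ Ideal.span {(Polynomial.X : Polynomial L) ^ (n + 1)}),
      e (Ideal.Quotient.mk J (MvPowerSeries.X (Fin.last n))) =
        Ideal.Quotient.mk (Ideal.span {(Polynomial.X : Polynomial L) ^ (n + 1)})
          Polynomial.X :=
  stmt_12_general L n F hF ρ hρ0 hρ J hJ
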